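/- Let ν be a kernel assigning to each x ∈ ℝ a symmetric Borel measure ν(x,·) on ℝ with ν(x,{0}) = 0, ν(x,−B) = ν(x,B) and sup_x ∫_ℝ min{1,y²} ν(x,dy) < ∞; let c : ℝ → [0,∞) be bounded Borel, and set q(x,ξ) := (1/2)c(x)ξ² + ∫_ℝ (1 − cos(ξy)) ν(x,dy) and N(x,y) := ν(x,(y,∞)). Assume: (i) there exists y₀ > 0 such that for every x, y ↦ N(x,y) is convex on (y₀,∞), and on (y₀,∞) the measure ν(x,·) has a density f(x,·) (i.e. ν(x,B) = ∫_B f(x,y) dy for every Borel B ⊆ (y₀,∞)) which is nonincreasing in y on (y₀,∞); (ii) for every open set O ⊆ ℝ the function x ↦ ν(x, O − x) is lower semicontinuous; (iii) lim_{ξ→0} inf_{x∈ℝ} q(x,ξ)/ξ² = ∞; (iv) there exists y₁ > 0 with inf_{x∈ℝ} ∫_{y₁}^∞ y N(x,y) dy > 0. If ∫_{y₀}^∞ dy / ( y³ · inf_{x∈ℝ} f(x,y) ) < ∞, then there exists r > 0 with ∫_{{|ξ|<r}} dξ / inf_{x∈ℝ} q(x,ξ) < ∞. -/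

import Mathlib

open MeasureTheory Filter Topology
open scoped ENNReal

/-- The symbol of a one-dimensional symmetric nice Feller process with symmetric Lévy
kernel on ℝ: `q(x,ξ) = (1/2)c(x)ξ² + ∫_ℝ (1 − cos(ξy)) ν(x,dy)`, valued in `[0,∞]`. -/
noncomputable def symSymbolR (c : ℝ → ℝ) (ν : ℝ → MeasureTheory.Measure ℝ)
    (x ξ : ℝ) : ℝ≥0∞ :=
  ENNReal.ofReal ((1 / 2) * c x * ξ ^ 2) +
    ∫⁻ y, ENNReal.ofReal (1 - Real.cos (ξ * y)) ∂(ν x)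

/-!
For `0 < |ξ| < 1 / (2 y₀)` put `a = 1 / |ξ|`. On `(a/2, a]` we have `1/2 < |ξ y| ≤ 1`, hence
`1 - cos (ξ y) ≥ (ξ y)² / 4 ≥ 1/16`, and there `ν(x,·)` has density at least `f(x,a)` by
monotonicity. So `q(x,ξ) ≥ ν(x,(a/2,a]) / 16 ≥ a f(x,a) / 32` uniformly in `x`, and the
substitution `y = 1/|ξ|` bounds `∫_{|ξ|<r} dξ / inf_x q(x,ξ)` by
`64 ∫_{2y₀}^∞ dy / (y³ inf_x f(x,y))`.
-/

open Set

namespace Real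

lemma sq_div_four_le_one_sub_cos {t : ℝ} (ht : |t| ≤ 1) : t ^ 2 / 4 ≤ 1 - cos t := by
  have hcos := abs_le.1 (cos_bound ht)
  have h4 : |t| ^ 4 ≤ |t| ^ 2 := pow_le_pow_of_le_one (abs_nonneg t) ht (by norm_num)
  rw [sq_abs] at h4
  nlinarith

lemma one_div_sixteen_le_one_sub_cos {t : ℝ} (h₁ : 1 / 2 < |t|) (h₂ : |t| ≤ 1) :
    1 / 16 ≤ 1 - cos t := by
  have := sq_div_four_le_one_sub_cos h₂
  nlinarith [sq_abs t]

end Real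

lemma ofReal_mul_le_setLIntegral_Ioc_of_antitoneOn {f : ℝ → ℝ} {a b : ℝ}
    (hf : AntitoneOn f (Ioc b a)) :
    ENNReal.ofReal (f a) * ENNReal.ofReal (a - b) ≤ ∫⁻ y in Ioc b a, ENNReal.ofReal (f y) := by
  rw [← Real.volume_Ioc, ← setLIntegral_const]
  exact setLIntegral_mono' measurableSet_Ioc fun y hy =>
    ENNReal.ofReal_le_ofReal (hf hy ⟨hy.1.trans_le hy.2, le_rfl⟩ hy.2)

lemma setLIntegral_ball_zero_comp_abs_le (G : ℝ → ℝ≥0∞) (r : ℝ) :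
    ∫⁻ ξ in Metric.ball 0 r, G |ξ| ≤ 2 * ∫⁻ t in Ioo 0 r, G t := by
  have hneg : ∫⁻ ξ in Ioo (-r) 0, G |ξ| = ∫⁻ t in Ioo 0 r, G t := by
    have himage : Ioo (-r) 0 = Neg.neg '' Ioo 0 r := by rw [image_neg_Ioo, neg_zero]
    rw [himage, lintegral_image_eq_lintegral_abs_deriv_mul measurableSet_Ioo
      (fun t _ => hasDerivWithinAt_neg t _) neg_injective.injOn]
    refine setLIntegral_congr_fun measurableSet_Ioo fun t (ht : t ∈ Ioo 0 r) => ?_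
    simp [abs_of_pos ht.1]
  have hpos : ∫⁻ ξ in Ico 0 r, G |ξ| = ∫⁻ t in Ioo 0 r, G t := by
    rw [← setLIntegral_congr (Ioo_ae_eq_Ico (μ := volume))]
    exact setLIntegral_congr_fun measurableSet_Ioo fun t ht => by rw [abs_of_pos ht.1]
  calc ∫⁻ ξ in Metric.ball 0 r, G |ξ|
      ≤ ∫⁻ ξ in Ioo (-r) 0 ∪ Ico 0 r, G |ξ| := by
        refine lintegral_mono_set fun t ht => ?_
        rw [Real.ball_eq_Ioo, zero_sub, zero_add] at ht
        rcases lt_or_ge t 0 with h | h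
        exacts [Or.inl ⟨ht.1, h⟩, Or.inr ⟨h, ht.2⟩]
    _ ≤ (∫⁻ ξ in Ioo (-r) 0, G |ξ|) + ∫⁻ ξ in Ico 0 r, G |ξ| := lintegral_union_le _ _ _
    _ = 2 * ∫⁻ t in Ioo 0 r, G t := by rw [hneg, hpos, two_mul]

lemma setLIntegral_Ioo_zero_eq_setLIntegral_Ioi_inv (G : ℝ → ℝ≥0∞) {r : ℝ} (hr : 0 < r) :
    ∫⁻ t in Ioo 0 r, G t = ∫⁻ y in Ioi r⁻¹, ENNReal.ofReal (y ^ 2)⁻¹ * G y⁻¹ := by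
  have hpos : ∀ y ∈ Ioi r⁻¹, 0 < y := fun y hy => (inv_pos.2 hr).trans hy
  have himage : Ioo 0 r = Inv.inv '' Ioi r⁻¹ := by
    rw [image_inv_eq_inv, inv_Ioi₀ (inv_pos.2 hr), inv_inv]
  rw [himage, lintegral_image_eq_lintegral_deriv_mul_of_antitoneOn measurableSet_Ioi
      (fun y hy => (hasDerivAt_inv (hpos y hy).ne').hasDerivWithinAt)
      (fun y hy _ _ hyz => inv_anti₀ (hpos y hy) hyz)]
  simp only [neg_neg]

lemma setLIntegral_Ioo_zero_inv_ofReal_div_mul (g : ℝ → ℝ≥0∞) {C r : ℝ} (hC : 0 < C)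
    (hr : 0 < r) :
    ∫⁻ t in Ioo 0 r, (ENNReal.ofReal (t⁻¹ / C) * g t⁻¹)⁻¹ =
      ENNReal.ofReal C * ∫⁻ y in Ioi r⁻¹, (ENNReal.ofReal (y ^ 3) * g y)⁻¹ := by
  rw [setLIntegral_Ioo_zero_eq_setLIntegral_Ioi_inv _ hr,
    ← lintegral_const_mul' _ _ ENNReal.ofReal_ne_top]
  refine setLIntegral_congr_fun measurableSet_Ioi fun y (hy : r⁻¹ < y) => ?_
  have hy₀ : 0 < y := (inv_pos.2 hr).trans hy
  have hsq : 0 < y ^ 2 := by positivity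
  calc ENNReal.ofReal (y ^ 2)⁻¹ * (ENNReal.ofReal (y⁻¹⁻¹ / C) * g y⁻¹⁻¹)⁻¹
      = (ENNReal.ofReal (y ^ 2) * (ENNReal.ofReal (y / C) * g y))⁻¹ := by
        rw [inv_inv, ENNReal.ofReal_inv_of_pos hsq, ENNReal.mul_inv
          (Or.inl (ENNReal.ofReal_pos.2 hsq).ne') (Or.inl ENNReal.ofReal_ne_top)]
    _ = (ENNReal.ofReal C⁻¹ * (ENNReal.ofReal (y ^ 3) * g y))⁻¹ := by
        rw [← mul_assoc, ← mul_assoc, ← ENNReal.ofReal_mul hsq.le,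
          ← ENNReal.ofReal_mul (inv_pos.2 hC).le]
        congr 3
        ring
    _ = ENNReal.ofReal C * (ENNReal.ofReal (y ^ 3) * g y)⁻¹ := by
        rw [ENNReal.mul_inv (Or.inl (ENNReal.ofReal_pos.2 (inv_pos.2 hC)).ne')
          (Or.inl ENNReal.ofReal_ne_top), ← ENNReal.ofReal_inv_of_pos (inv_pos.2 hC), inv_inv]

section SymbolBound

variable {c : ℝ → ℝ} {ν : ℝ → Measure ℝ}

lemma ofReal_mul_measure_Ioc_le_symSymbolR (x ξ : ℝ) :
    ENNReal.ofReal (1 / 16) * ν x (Ioc (|ξ|⁻¹ / 2) |ξ|⁻¹) ≤ symSymbolR c ν x ξ := by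
  rcases eq_or_ne ξ 0 with rfl | hξ
  · simp
  have hξ' : 0 < |ξ| := abs_pos.2 hξ
  have hcos : ∀ y ∈ Ioc (|ξ|⁻¹ / 2) |ξ|⁻¹, 1 / 16 ≤ 1 - Real.cos (ξ * y) := by
    intro y ⟨hy₁, hy₂⟩
    have hy : 0 < y := lt_trans (by positivity) hy₁
    have habs : |ξ * y| = |ξ| * y := by rw [abs_mul, abs_of_pos hy]
    refine Real.one_div_sixteen_le_one_sub_cos ?_ ?_ <;> rw [habs]
    · calc 1 / 2 = |ξ| * (|ξ|⁻¹ / 2) := by field_simp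
        _ < |ξ| * y := mul_lt_mul_of_pos_left hy₁ hξ'
    · calc |ξ| * y ≤ |ξ| * |ξ|⁻¹ := mul_le_mul_of_nonneg_left hy₂ hξ'.le
        _ = 1 := mul_inv_cancel₀ hξ'.ne'
  calc ENNReal.ofReal (1 / 16) * ν x (Ioc (|ξ|⁻¹ / 2) |ξ|⁻¹)
      = ∫⁻ _ in Ioc (|ξ|⁻¹ / 2) |ξ|⁻¹, ENNReal.ofReal (1 / 16) ∂ν x :=
        (setLIntegral_const _ _).symm
    _ ≤ ∫⁻ y in Ioc (|ξ|⁻¹ / 2) |ξ|⁻¹, ENNReal.ofReal (1 - Real.cos (ξ * y)) ∂ν x :=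
        setLIntegral_mono' measurableSet_Ioc fun y hy => ENNReal.ofReal_le_ofReal (hcos y hy)
    _ ≤ ∫⁻ y, ENNReal.ofReal (1 - Real.cos (ξ * y)) ∂ν x := setLIntegral_le_lintegral _ _
    _ ≤ symSymbolR c ν x ξ := le_add_self

lemma ofReal_mul_density_le_symSymbolR {f : ℝ → ℝ} {x y₀ ξ : ℝ}
    (hdens : ∀ B : Set ℝ, MeasurableSet B → B ⊆ Ioi y₀ →
      ν x B = ∫⁻ y in B, ENNReal.ofReal (f y))
    (hdecr : AntitoneOn f (Ioi y₀)) (hξ : 2 * y₀ ≤ |ξ|⁻¹) :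
    ENNReal.ofReal (|ξ|⁻¹ / 32) * ENNReal.ofReal (f |ξ|⁻¹) ≤ symSymbolR c ν x ξ := by
  have hsub : Ioc (|ξ|⁻¹ / 2) |ξ|⁻¹ ⊆ Ioi y₀ := fun y hy => lt_of_le_of_lt (by linarith) hy.1
  calc ENNReal.ofReal (|ξ|⁻¹ / 32) * ENNReal.ofReal (f |ξ|⁻¹)
      = ENNReal.ofReal (1 / 16) *
          (ENNReal.ofReal (f |ξ|⁻¹) * ENNReal.ofReal (|ξ|⁻¹ - |ξ|⁻¹ / 2)) := by
        rw [mul_comm (ENNReal.ofReal _), mul_left_comm,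
          ← ENNReal.ofReal_mul (by norm_num : (0 : ℝ) ≤ 1 / 16)]
        congr 2
        ring
    _ ≤ ENNReal.ofReal (1 / 16) * ν x (Ioc (|ξ|⁻¹ / 2) |ξ|⁻¹) := by
        rw [hdens _ measurableSet_Ioc hsub]
        gcongr
        exact ofReal_mul_le_setLIntegral_Ioc_of_antitoneOn (hdecr.mono hsub)
    _ ≤ symSymbolR c ν x ξ := ofReal_mul_measure_Ioc_le_symSymbolR x ξ

lemma inv_iInf_symSymbolR_le {f : ℝ → ℝ → ℝ} {y₀ ξ : ℝ}
    (hdens : ∀ x, ∀ B : Set ℝ, MeasurableSet B → B ⊆ Ioi y₀ →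
      ν x B = ∫⁻ y in B, ENNReal.ofReal (f x y))
    (hdecr : ∀ x, AntitoneOn (f x) (Ioi y₀)) (hξ : |ξ| < (2 * y₀)⁻¹) :
    (⨅ x, symSymbolR c ν x ξ)⁻¹ ≤
      (ENNReal.ofReal (|ξ|⁻¹ / 32) * ⨅ x, ENNReal.ofReal (f x |ξ|⁻¹))⁻¹ := by
  rcases eq_or_ne ξ 0 with rfl | hξ₀
  · simp
  have hξ' : 0 < |ξ| := abs_pos.2 hξ₀
  have h2y₀ : 2 * y₀ ≤ |ξ|⁻¹ :=
    (lt_inv_comm₀ (inv_pos.1 (hξ'.trans hξ)) hξ').2 hξ |>.le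
  refine ENNReal.inv_le_inv.2 (le_iInf fun x => ?_)
  calc ENNReal.ofReal (|ξ|⁻¹ / 32) * ⨅ x, ENNReal.ofReal (f x |ξ|⁻¹)
      ≤ ENNReal.ofReal (|ξ|⁻¹ / 32) * ENNReal.ofReal (f x |ξ|⁻¹) := by gcongr; exact iInf_le _ x
    _ ≤ symSymbolR c ν x ξ := ofReal_mul_density_le_symSymbolR (hdens x) (hdecr x) h2y₀

end SymbolBound

theorem stmt19_general (c : ℝ → ℝ) (ν : ℝ → MeasureTheory.Measure ℝ) (f : ℝ → ℝ → ℝ)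
    (y₀ : ℝ) (hy₀ : 0 < y₀)
    -- (i) uniform quasi-unimodality with nonincreasing density on (y₀,∞)
    (hdens : ∀ x, ∀ B : Set ℝ, MeasurableSet B → B ⊆ Set.Ioi y₀ →
      ν x B = ∫⁻ y in B, ENNReal.ofReal (f x y))
    (hdecr : ∀ x, AntitoneOn (f x) (Set.Ioi y₀))
    -- main hypothesis
    (hint : ∫⁻ y in Set.Ioi y₀,
      (ENNReal.ofReal (y ^ 3) * ⨅ x, ENNReal.ofReal (f x y))⁻¹ < ∞) :
    ∃ r > (0 : ℝ), ∫⁻ ξ in Metric.ball (0 : ℝ) r,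
      (⨅ x, symSymbolR c ν x ξ)⁻¹ < ∞ := by
  set g : ℝ → ℝ≥0∞ := fun y => ⨅ x, ENNReal.ofReal (f x y)
  have hr : 0 < (2 * y₀)⁻¹ := by positivity
  refine ⟨(2 * y₀)⁻¹, hr, ?_⟩
  calc ∫⁻ ξ in Metric.ball 0 (2 * y₀)⁻¹, (⨅ x, symSymbolR c ν x ξ)⁻¹
      ≤ ∫⁻ ξ in Metric.ball 0 (2 * y₀)⁻¹, (ENNReal.ofReal (|ξ|⁻¹ / 32) * g |ξ|⁻¹)⁻¹ :=
        setLIntegral_mono' measurableSet_ball fun ξ hξ =>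
          inv_iInf_symSymbolR_le hdens hdecr (by simpa using hξ)
    _ ≤ 2 * ∫⁻ t in Ioo 0 (2 * y₀)⁻¹, (ENNReal.ofReal (t⁻¹ / 32) * g t⁻¹)⁻¹ :=
        setLIntegral_ball_zero_comp_abs_le (fun t => (ENNReal.ofReal (t⁻¹ / 32) * g t⁻¹)⁻¹) _
    _ = 2 * (ENNReal.ofReal 32 * ∫⁻ y in Ioi (2 * y₀), (ENNReal.ofReal (y ^ 3) * g y)⁻¹) := by
        rw [setLIntegral_Ioo_zero_inv_ofReal_div_mul g (by norm_num) hr, inv_inv]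
    _ < ∞ := by
        refine ENNReal.mul_lt_top ENNReal.ofNat_lt_top (ENNReal.mul_lt_top ENNReal.ofReal_lt_top ?_)
        exact (lintegral_mono_set (Ioi_subset_Ioi (by linarith))).trans_lt hint

/-- a sufficient condition for transience in terms of the (nonincreasing)
density `f(x,·)` of the Lévy kernel on `(y₀,∞)`, under uniform quasi-unimodality, lower
semicontinuity, and conditions (3.2), (3.12). -/
theorem stmt19 (c : ℝ → ℝ) (ν : ℝ → MeasureTheory.Measure ℝ) (f : ℝ → ℝ → ℝ)
    (y₀ : ℝ) (hy₀ : 0 < y₀)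
    (hc : ∀ x, 0 ≤ c x) (hcb : ∃ K : ℝ, ∀ x, c x ≤ K)
    (hν0 : ∀ x, ν x {0} = 0)
    (hνsym : ∀ x, ∀ B : Set ℝ, MeasurableSet B → ν x (Neg.neg ⁻¹' B) = ν x B)
    (hν : (⨆ x, ∫⁻ y, ENNReal.ofReal (min 1 (y ^ 2)) ∂(ν x)) < ∞)
    -- (i) uniform quasi-unimodality with nonincreasing density on (y₀,∞)
    (hqum : ∀ x, ConvexOn ℝ (Set.Ioi y₀) fun y => (ν x (Set.Ioi y)).toReal)
    (hfnonneg : ∀ x y, 0 ≤ f x y)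
    (hdens : ∀ x, ∀ B : Set ℝ, MeasurableSet B → B ⊆ Set.Ioi y₀ →
      ν x B = ∫⁻ y in B, ENNReal.ofReal (f x y))
    (hdecr : ∀ x, AntitoneOn (f x) (Set.Ioi y₀))
    -- (ii) lower semicontinuity
    (hlsc : ∀ O : Set ℝ, IsOpen O →
      LowerSemicontinuous fun x => ν x ((fun z => z + x) ⁻¹' O))
    -- (iii) condition (3.2)
    (hlim : Tendsto (fun ξ : ℝ => (⨅ x, symSymbolR c ν x ξ) / ENNReal.ofReal (ξ ^ 2))
      (𝓝[≠] (0 : ℝ)) (𝓝 ∞))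
    -- (iv) condition (3.12)
    (htail : ∃ y₁ > (0 : ℝ),
      0 < ⨅ x, ∫⁻ y in Set.Ioi y₁, ENNReal.ofReal y * ν x (Set.Ioi y))
    -- measurability
    (hmi : Measurable fun ξ : ℝ => ⨅ x, symSymbolR c ν x ξ)
    (hmf : Measurable fun y : ℝ => ⨅ x, ENNReal.ofReal (f x y))
    -- main hypothesis
    (hint : ∫⁻ y in Set.Ioi y₀,
      (ENNReal.ofReal (y ^ 3) * ⨅ x, ENNReal.ofReal (f x y))⁻¹ < ∞) :
    ∃ r > (0 : ℝ), ∫⁻ ξ in Metric.ball (0 : ℝ) r,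
      (⨅ x, symSymbolR c ν x ξ)⁻¹ < ∞ :=
  stmt19_general c ν f y₀ hy₀ hdens hdecr hint
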